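/- Let d be even and X₁,…,X_d nonpositive random variables with X_i ~ F_i. Then the supremum of E(X₁⋯X_d) over all couplings is attained by the comonotonic coupling X_i = F_i⁻¹(U), U ~ Uniform[0,1], and equals E(∏_{i=1}^d G_i⁻¹(U)) where G_i is the distribution function of |X_i|. -/

import Mathlib

/-!
Since `d` is even, `∏ Xᵢ = ∏ |Xᵢ|`, so everything reduces to nonnegative vectors `Z`
whose marginals are the laws `Gᵢ` of `|Xᵢ|`. The layer-cake formula over the positive
orthant gives `E ∏ Zᵢ = ∫ P(∀ i, tᵢ < Zᵢ) dt`, and `P(∀ i, tᵢ < Zᵢ) ≤ minⱼ P(tⱼ < Zⱼ)`,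
which only depends on the marginals. When `Z` is comonotone the events `{tᵢ < Zᵢ}` are
nested, so this is an equality. For `U` uniform on `(0,1)` both `(-Fᵢ⁻¹(U))ᵢ` and
`(Gᵢ⁻¹(U))ᵢ` are comonotone with marginals `Gᵢ`, which gives the equality of the two
quantile integrals and the bound for every coupling.
-/

open MeasureTheory Set

/-- Generalized inverse (quantile function). -/
noncomputable def quantile (ν : Measure ℝ) (u : ℝ) : ℝ :=
  sInf {x : ℝ | u ≤ (ν (Iic x)).toReal}

open ProbabilityTheory

section Quantile

variable {ν : Measure ℝ} {u x : ℝ}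

lemma quantile_eq_sInf_cdf (ν : Measure ℝ) [IsProbabilityMeasure ν] (u : ℝ) :
    quantile ν u = sInf {x | u ≤ cdf ν x} := by
  simp_rw [quantile, cdf_eq_real, measureReal_def]

lemma bddBelow_setOf_le_cdf (hu : 0 < u) : BddBelow {x | u ≤ cdf ν x} := by
  obtain ⟨x₀, hx₀⟩ := ((tendsto_cdf_atBot (μ := ν)).eventually_lt_const hu).exists
  exact ⟨x₀, fun x hx => ((cdf ν).mono.reflect_lt (hx₀.trans_le hx)).le⟩

lemma nonempty_setOf_le_cdf (hu : u < 1) : {x | u ≤ cdf ν x}.Nonempty :=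
  ((tendsto_cdf_atTop (μ := ν)).eventually_const_lt hu).exists.imp fun _ => le_of_lt

variable [IsProbabilityMeasure ν]

lemma quantile_le_iff (hu : u ∈ Ioo (0 : ℝ) 1) : quantile ν u ≤ x ↔ u ≤ cdf ν x := by
  rw [quantile_eq_sInf_cdf]
  refine ⟨fun h => ?_, fun h => csInf_le (bddBelow_setOf_le_cdf hu.1) h⟩
  have hgt : ∀ y > x, u ≤ cdf ν y := fun y hy => by
    obtain ⟨z, hz, hzy⟩ := exists_lt_of_csInf_lt (nonempty_setOf_le_cdf hu.2) (h.trans_lt hy)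
    exact hz.trans ((cdf ν).mono hzy.le)
  exact ge_of_tendsto (((cdf ν).right_continuous x).tendsto.mono_left
    (nhdsWithin_mono x Ioi_subset_Ici_self)) (eventually_nhdsWithin_of_forall hgt)

lemma monotoneOn_quantile : MonotoneOn (quantile ν) (Ioo 0 1) := fun u hu v hv huv => by
  simp_rw [quantile_eq_sInf_cdf]
  exact csInf_le_csInf (bddBelow_setOf_le_cdf hu.1) (nonempty_setOf_le_cdf hv.2)
    fun x hx => huv.trans hx

lemma aemeasurable_quantile : AEMeasurable (quantile ν) (volume.restrict (Ioo 0 1)) :=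
  aemeasurable_restrict_of_monotoneOn measurableSet_Ioo monotoneOn_quantile

theorem map_quantile_volume_Ioo : (volume.restrict (Ioo (0 : ℝ) 1)).map (quantile ν) = ν := by
  refine Measure.ext_of_Iic _ _ fun x => ?_
  have hpre : quantile ν ⁻¹' Iic x ∩ Ioo 0 1 = Iic (cdf ν x) ∩ Ioo 0 1 := by
    ext u
    exact and_congr_left quantile_le_iff
  rw [Measure.map_apply_of_aemeasurable aemeasurable_quantile measurableSet_Iic,
    Measure.restrict_apply' measurableSet_Ioo, hpre, ← Measure.restrict_apply' measurableSet_Ioo,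
    Measure.restrict_congr_set Ioo_ae_eq_Ioc, Measure.restrict_apply' measurableSet_Ioc,
    Iic_inter_Ioc_of_le (cdf_le_one _ _), Real.volume_Ioc, sub_zero, ofReal_cdf]

theorem map_neg_quantile_volume_Ioo (hν : ∀ᵐ x ∂ν, x ≤ 0) :
    (volume.restrict (Ioo (0 : ℝ) 1)).map (fun u => -quantile ν u) = ν.map (fun x => |x|) := by
  refine (AEMeasurable.map_map_of_aemeasurable (g := Neg.neg) measurable_neg.aemeasurable
    aemeasurable_quantile).symm.trans ?_
  rw [map_quantile_volume_Ioo]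
  exact Measure.map_congr (hν.mono fun x hx => (abs_of_nonpos hx).symm)

end Quantile

lemma ae_nonneg_of_map_eq_map_abs {α : Type*} [MeasurableSpace α] {κ : Measure α}
    {ν : Measure ℝ} {Z : α → ℝ} (hZ : AEMeasurable Z κ)
    (h : κ.map Z = ν.map (fun x => |x|)) :
    ∀ᵐ a ∂κ, 0 ≤ Z a :=
  ae_of_ae_map hZ (h ▸ (ae_map_iff measurable_abs.aemeasurable measurableSet_Ici).2
    (ae_of_all _ fun x => abs_nonneg x))

theorem Finset.prod_neg_of_even_card {ι R : Type*} [Fintype ι] [CommMonoid R]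
    [HasDistribNeg R] (h : Even (Fintype.card ι)) (f : ι → R) : ∏ i, -f i = ∏ i, f i := by
  rw [Finset.prod_neg, Finset.card_univ, h.neg_one_pow, one_mul]

section Comonotone

variable {ι α β : Type*}

theorem exists_lt_imp_forall_lt_of_monovaryOn [Finite ι] [Nonempty ι] {s : Set β}
    {Z : ι → β → ℝ} (hZ : ∀ i j, MonovaryOn (Z i) (Z j) s) (t : ι → ℝ) :
    ∃ j, ∀ b ∈ s, t j < Z j b → ∀ i, t i < Z i b := by
  -- the superlevel sets `S i` are nested; `j` indexes the smallest one
  set S : ι → Set β := fun i => {b | b ∈ s ∧ t i < Z i b}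
  have hchain : ∀ i j, S i ⊆ S j ∨ S j ⊆ S i := by
    refine fun i j => or_iff_not_imp_left.2 fun hij => ?_
    obtain ⟨a, ⟨has, hia⟩, hja⟩ := not_subset.1 hij
    exact fun b ⟨hbs, hjb⟩ => ⟨hbs, hia.trans_le
      (hZ i j has hbs ((not_lt.1 fun h => hja ⟨has, h⟩).trans_lt hjb))⟩
  obtain ⟨j, -, hj⟩ := Set.finite_univ.exists_minimalFor S univ univ_nonempty
  refine ⟨j, fun b hbs hjb i => ?_⟩
  have hji : S j ⊆ S i := (hchain j i).elim id fun hij => hj (mem_univ i) hij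
  exact (hji ⟨hbs, hjb⟩).2

variable [Fintype ι] [MeasurableSpace α] [MeasurableSpace β]

theorem lintegral_prod_ofReal_eq_lintegral_meas_forall_lt {κ : Measure α} [SFinite κ]
    {Z : ι → α → ℝ} (hZ : ∀ i, AEMeasurable (Z i) κ) :
    ∫⁻ a, ∏ i, ENNReal.ofReal (Z i a) ∂κ
      = ∫⁻ t, κ {a | ∀ i, t i < Z i a}
          ∂(Measure.pi fun _ : ι => volume.restrict (Ioi 0)) := by
  set π := Measure.pi fun _ : ι => volume.restrict (Ioi (0 : ℝ))
  set S : Set (α × (ι → ℝ)) := {p | ∀ i, p.2 i < Z i p.1}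
  have hS : NullMeasurableSet S (κ.prod π) := by
    simp_rw [S, ofPred_forall]
    exact .iInter fun i => nullMeasurableSet_lt (by fun_prop)
      ((hZ i).comp_quasiMeasurePreserving Measure.quasiMeasurePreserving_fst)
  have hsection (a : α) :
      ∫⁻ t, S.indicator 1 (a, t) ∂π = ∏ i, ENNReal.ofReal (Z i a) := by
    have hpi : {t : ι → ℝ | ∀ i, t i < Z i a} = univ.pi fun i => Iio (Z i a) := by
      ext; simp
    refine (lintegral_indicator_one (s := {t : ι → ℝ | ∀ i, t i < Z i a}) ?_).trans ?_
    · exact hpi ▸ .univ_pi fun i => measurableSet_Iio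
    rw [hpi, Measure.pi_pi]
    refine Finset.prod_congr rfl fun i _ => ?_
    rw [Measure.restrict_apply measurableSet_Iio, Iio_inter_Ioi, Real.volume_Ioo, sub_zero]
  have hfiber (t : ι → ℝ) :
      ∫⁻ a, S.indicator 1 (a, t) ∂κ = κ {a | ∀ i, t i < Z i a} := by
    refine lintegral_indicator_one₀ (s := {a | ∀ i, t i < Z i a}) ?_
    simp_rw [ofPred_forall]
    exact .iInter fun i => nullMeasurableSet_lt aemeasurable_const (hZ i)
  simp_rw [← hsection, ← hfiber]
  exact lintegral_lintegral_swap ((aemeasurable_indicator_const_iff 1).2 hS)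

theorem integral_prod_eq_toReal_lintegral_prod_ofReal {κ : Measure α} {Z : ι → α → ℝ}
    (hZ : ∀ i, AEMeasurable (Z i) κ)
    (hZ0 : ∀ᵐ a ∂κ, ∀ i, 0 ≤ Z i a) :
    ∫ a, ∏ i, Z i a ∂κ = (∫⁻ a, ∏ i, ENNReal.ofReal (Z i a) ∂κ).toReal := by
  rw [integral_eq_lintegral_of_nonneg_ae
    (hZ0.mono fun a ha => Finset.prod_nonneg fun i _ => ha i)
    (Finset.aemeasurable_fun_prod _ fun i _ => hZ i).aestronglyMeasurable]
  exact congrArg _ (lintegral_congr_ae (hZ0.mono fun a ha =>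
    ENNReal.ofReal_prod_of_nonneg fun i _ => ha i))

variable [Nonempty ι] {κ : Measure α} {κ' : Measure β} [SFinite κ] [SFinite κ']
  {Z : ι → α → ℝ} {Z' : ι → β → ℝ} {s : Set β}

theorem lintegral_prod_ofReal_le_of_map_eq_of_monovaryOn
    (hZ : ∀ i, AEMeasurable (Z i) κ) (hZ' : ∀ i, AEMeasurable (Z' i) κ')
    (hmap : ∀ i, κ.map (Z i) = κ'.map (Z' i))
    (hs : ∀ᵐ b ∂κ', b ∈ s) (hmono : ∀ i j, MonovaryOn (Z' i) (Z' j) s) :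
    ∫⁻ a, ∏ i, ENNReal.ofReal (Z i a) ∂κ ≤ ∫⁻ b, ∏ i, ENNReal.ofReal (Z' i b) ∂κ' := by
  rw [lintegral_prod_ofReal_eq_lintegral_meas_forall_lt hZ,
    lintegral_prod_ofReal_eq_lintegral_meas_forall_lt hZ']
  refine lintegral_mono fun t => ?_
  obtain ⟨j, hj⟩ := exists_lt_imp_forall_lt_of_monovaryOn hmono t
  calc κ {a | ∀ i, t i < Z i a}
      ≤ κ (Z j ⁻¹' Ioi (t j)) := measure_mono fun a ha => ha j
    _ = κ' (Z' j ⁻¹' Ioi (t j)) := by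
        rw [← Measure.map_apply_of_aemeasurable (hZ j) measurableSet_Ioi, hmap,
          Measure.map_apply_of_aemeasurable (hZ' j) measurableSet_Ioi]
    _ ≤ κ' {b | ∀ i, t i < Z' i b} :=
        measure_mono_ae (hs.mono fun b hb hjb => hj b hb hjb)

theorem integral_prod_le_of_map_eq_of_monovaryOn
    (hZ : ∀ i, AEMeasurable (Z i) κ) (hZ' : ∀ i, AEMeasurable (Z' i) κ')
    (hZ0 : ∀ᵐ a ∂κ, ∀ i, 0 ≤ Z i a) (hZ'0 : ∀ᵐ b ∂κ', ∀ i, 0 ≤ Z' i b)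
    (hmap : ∀ i, κ.map (Z i) = κ'.map (Z' i))
    (hs : ∀ᵐ b ∂κ', b ∈ s) (hmono : ∀ i j, MonovaryOn (Z' i) (Z' j) s)
    (hint : Integrable (fun b => ∏ i, Z' i b) κ') :
    ∫ a, ∏ i, Z i a ∂κ ≤ ∫ b, ∏ i, Z' i b ∂κ' := by
  rw [integral_prod_eq_toReal_lintegral_prod_ofReal hZ hZ0,
    integral_prod_eq_toReal_lintegral_prod_ofReal hZ' hZ'0]
  refine ENNReal.toReal_mono ?_
    (lintegral_prod_ofReal_le_of_map_eq_of_monovaryOn hZ hZ' hmap hs hmono)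
  refine (lt_of_eq_of_lt (lintegral_congr_ae (hZ'0.mono fun b hb => ?_))
    hint.lintegral_lt_top).ne
  exact (ENNReal.ofReal_prod_of_nonneg fun i _ => hb i).symm

theorem integral_prod_eq_of_map_eq_of_monovaryOn {s' : Set α}
    (hZ : ∀ i, AEMeasurable (Z i) κ) (hZ' : ∀ i, AEMeasurable (Z' i) κ')
    (hZ0 : ∀ᵐ a ∂κ, ∀ i, 0 ≤ Z i a) (hZ'0 : ∀ᵐ b ∂κ', ∀ i, 0 ≤ Z' i b)
    (hmap : ∀ i, κ.map (Z i) = κ'.map (Z' i))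
    (hs' : ∀ᵐ a ∂κ, a ∈ s') (hmono' : ∀ i j, MonovaryOn (Z i) (Z j) s')
    (hs : ∀ᵐ b ∂κ', b ∈ s) (hmono : ∀ i j, MonovaryOn (Z' i) (Z' j) s) :
    ∫ a, ∏ i, Z i a ∂κ = ∫ b, ∏ i, Z' i b ∂κ' := by
  rw [integral_prod_eq_toReal_lintegral_prod_ofReal hZ hZ0,
    integral_prod_eq_toReal_lintegral_prod_ofReal hZ' hZ'0]
  exact congrArg _ (le_antisymm
    (lintegral_prod_ofReal_le_of_map_eq_of_monovaryOn hZ hZ' hmap hs hmono)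
    (lintegral_prod_ofReal_le_of_map_eq_of_monovaryOn hZ' hZ (fun i => (hmap i).symm) hs' hmono'))

end Comonotone

section NonposQuantile

variable {ι : Type*} {F : ι → Measure ℝ} [∀ i, IsProbabilityMeasure (F i)]

lemma monovaryOn_neg_quantile (i j : ι) :
    MonovaryOn (fun u => -quantile (F i) u) (fun u => -quantile (F j) u) (Ioo 0 1) :=
  monotoneOn_quantile.neg.monovaryOn monotoneOn_quantile.neg

lemma ae_nonneg_neg_quantile [Countable ι] (hF : ∀ i, ∀ᵐ x ∂F i, x ≤ 0) :
    ∀ᵐ u ∂volume.restrict (Ioo 0 1), ∀ i, 0 ≤ -quantile (F i) u :=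
  ae_all_iff.2 fun i => ae_nonneg_of_map_eq_map_abs aemeasurable_quantile.neg
    (map_neg_quantile_volume_Ioo (hF i))

variable [Fintype ι] [Nonempty ι]

theorem integral_prod_neg_quantile_eq (hF : ∀ i, ∀ᵐ x ∂F i, x ≤ 0) :
    ∫ u in Ioo 0 1, ∏ i, -quantile (F i) u
      = ∫ u in Ioo 0 1, ∏ i, quantile ((F i).map fun x => |x|) u := by
  have (i : ι) : IsProbabilityMeasure ((F i).map fun x => |x|) :=
    Measure.isProbabilityMeasure_map measurable_abs.aemeasurable
  have hQ (i : ι) := map_quantile_volume_Ioo (ν := (F i).map fun x => |x|)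
  exact integral_prod_eq_of_map_eq_of_monovaryOn (fun _ => aemeasurable_quantile.neg)
    (fun _ => aemeasurable_quantile) (ae_nonneg_neg_quantile hF)
    (ae_all_iff.2 fun i => ae_nonneg_of_map_eq_map_abs aemeasurable_quantile (hQ i))
    (fun i => (map_neg_quantile_volume_Ioo (hF i)).trans (hQ i).symm)
    (ae_restrict_mem measurableSet_Ioo) monovaryOn_neg_quantile
    (ae_restrict_mem measurableSet_Ioo)
    fun _ _ => monotoneOn_quantile.monovaryOn monotoneOn_quantile

theorem integral_prod_le_integral_prod_neg_quantile (hF : ∀ i, ∀ᵐ x ∂F i, x ≤ 0)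
    {α : Type*} [MeasurableSpace α] {κ : Measure α} [SFinite κ] {Z : ι → α → ℝ}
    (hZ : ∀ i, AEMeasurable (Z i) κ) (hmap : ∀ i, κ.map (Z i) = (F i).map fun x => |x|)
    (hint : IntegrableOn (fun u => ∏ i, -quantile (F i) u) (Ioo 0 1)) :
    ∫ a, ∏ i, Z i a ∂κ ≤ ∫ u in Ioo 0 1, ∏ i, -quantile (F i) u :=
  integral_prod_le_of_map_eq_of_monovaryOn hZ (fun _ => aemeasurable_quantile.neg)
    (ae_all_iff.2 fun i => ae_nonneg_of_map_eq_map_abs (hZ i) (hmap i))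
    (ae_nonneg_neg_quantile hF)
    (fun i => (hmap i).trans (map_neg_quantile_volume_Ioo (hF i)).symm)
    (ae_restrict_mem measurableSet_Ioo) monovaryOn_neg_quantile hint

end NonposQuantile

theorem stmt_14_general (d : ℕ) (hd : Even d) (F : Fin d → Measure ℝ)
    [∀ i, IsProbabilityMeasure (F i)]
    (hnonpos : ∀ i, F i (Iic (0:ℝ)) = 1)
    (hIntC : IntegrableOn (fun u => ∏ i, quantile (F i) u) (Icc (0:ℝ) 1) volume) :
    (∫ u in Icc (0:ℝ) 1, ∏ i, quantile (F i) u
        = ∫ u in Icc (0:ℝ) 1, ∏ i, quantile ((F i).map (fun x => |x|)) u) ∧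
    (∀ (Ω : Type*) [MeasurableSpace Ω] (μ : Measure Ω) [IsProbabilityMeasure μ]
        (Y : Fin d → Ω → ℝ), (∀ i, Measurable (Y i)) → (∀ i, μ.map (Y i) = F i) →
        Integrable (fun ω => ∏ i, Y i ω) μ →
        ∫ ω, ∏ i, Y i ω ∂μ ≤ ∫ u in Icc (0:ℝ) 1, ∏ i, quantile (F i) u) := by
  rcases isEmpty_or_nonempty (Fin d) with _ | _
  · exact ⟨by simp, fun Ω _ μ _ _ _ _ _ => by simp⟩
  have hd' : Even (Fintype.card (Fin d)) := by rwa [Fintype.card_fin]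
  have hF (i : Fin d) : ∀ᵐ x ∂F i, x ≤ 0 :=
    (ae_iff_measure_eq measurableSet_Iic.nullMeasurableSet).2
      (by rw [measure_univ, ← hnonpos i]; rfl)
  have hint : IntegrableOn (fun u => ∏ i, -quantile (F i) u) (Ioo 0 1) := by
    simpa only [Finset.prod_neg_of_even_card hd'] using hIntC.mono_set Ioo_subset_Icc_self
  simp_rw [setIntegral_congr_set (Ioo_ae_eq_Icc (a := (0 : ℝ)) (b := 1)).symm,
    ← Finset.prod_neg_of_even_card hd' fun i => quantile (F i) _]
  refine ⟨integral_prod_neg_quantile_eq hF, fun Ω _ μ _ Y hYm hYd _ => ?_⟩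
  have hY0 : ∀ᵐ ω ∂μ, ∀ i, Y i ω ≤ 0 :=
    ae_all_iff.2 fun i => ae_of_ae_map (hYm i).aemeasurable ((hYd i).symm ▸ hF i)
  calc ∫ ω, ∏ i, Y i ω ∂μ = ∫ ω, ∏ i, |Y i ω| ∂μ :=
        integral_congr_ae (hY0.mono fun ω hω => by
          simp_rw [abs_of_nonpos (hω _), Finset.prod_neg_of_even_card hd'])
    _ ≤ _ := integral_prod_le_integral_prod_neg_quantile hF (fun i => (hYm i).abs.aemeasurable)
          (fun i => by rw [← hYd i, Measure.map_map measurable_abs (hYm i)]; rfl) hint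

/-- For `d` even and nonpositive marginals, the comonotonic coupling `X_i = F_i⁻¹(U)`
attains the supremum of the expected product, which equals `E(∏ G_i⁻¹(U))` where `G_i`
is the distribution function of `|X_i|`. -/
theorem stmt_14 (d : ℕ) (hd : Even d) (F : Fin d → Measure ℝ)
    [∀ i, IsProbabilityMeasure (F i)]
    (hnonpos : ∀ i, F i (Iic (0:ℝ)) = 1)
    (hIntC : IntegrableOn (fun u => ∏ i, quantile (F i) u) (Icc (0:ℝ) 1) volume)
    (hIntQ : IntegrableOn
      (fun u => ∏ i, quantile ((F i).map (fun x => |x|)) u) (Icc (0:ℝ) 1) volume) :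
    (∫ u in Icc (0:ℝ) 1, ∏ i, quantile (F i) u
        = ∫ u in Icc (0:ℝ) 1, ∏ i, quantile ((F i).map (fun x => |x|)) u) ∧
    (∀ (Ω : Type*) [MeasurableSpace Ω] (μ : Measure Ω) [IsProbabilityMeasure μ]
        (Y : Fin d → Ω → ℝ), (∀ i, Measurable (Y i)) → (∀ i, μ.map (Y i) = F i) →
        Integrable (fun ω => ∏ i, Y i ω) μ →
        ∫ ω, ∏ i, Y i ω ∂μ ≤ ∫ u in Icc (0:ℝ) 1, ∏ i, quantile (F i) u) :=
  stmt_14_general d hd F hnonpos hIntC
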